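/- Let h: ℝⁿ → ℝ be strictly convex and absolutely symmetric (invariant under permutations and sign changes of coordinates). Then the function X ↦ h(σ(X)) on n×n real matrices, where σ(X) is the vector of singular values, is strictly convex. -/

import Mathlib

/-!
Let `Z = a • X + b • Y` and `w = a • σ(X) + b • σ(Y)`. By Ky Fan's maximum principle, the partial
sums of `σ(Z)` are at most those of `w`, and a nonnegative nonincreasing vector weakly
majorized by `w` lies in the convex hull of the signed permutations of `w` (separate by a
hyperplane and use the rearrangement inequality together with Abel summation). As `h` is
convex and constant on those signed permutations, `h (σ Z) ≤ h w ≤ a h(σ X) + b h(σ Y)`, the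
second inequality being strict unless `σ(X) = σ(Y)`. In that case `w = σ(X)`, and the first
inequality is strict by strict convexity of `h` unless `σ(Z)` is a signed permutation of `w`;
being nonnegative and sorted, `σ(Z)` would then equal `σ(X) = σ(Y)`, which contradicts the
strict convexity of the squared Frobenius norm `∑ σᵢ²`.
-/

open Matrix

/-- Singular values of a real square matrix, in nonincreasing order. -/
noncomputable def svals {n : ℕ} (A : Matrix (Fin n) (Fin n) ℝ) : Fin n → ℝ :=
  fun i =>
    let e : Fin n → ℝ := fun j => Real.sqrt (((by simpa only [Matrix.conjTranspose_eq_transpose_of_trivial] using Matrix.isHermitian_conjTranspose_mul_self A : (Aᵀ * A).IsHermitian)).eigenvalues j)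
    (e ∘ Tuple.sort e) i.rev

open Finset RealInnerProductSpace

theorem Fin.sum_mul_nonneg_of_antitone {R : Type*} [CommRing R] [PartialOrder R] [IsOrderedRing R]
    {n : ℕ} {D x : Fin n → R} (hD : Antitone D) (hD0 : ∀ i, 0 ≤ D i)
    (hx : ∀ i, 0 ≤ ∑ j ∈ Iic i, x j) : 0 ≤ ∑ i, D i * x i := by
  induction n with
  | zero => simp
  | succ n ih =>
    have hsplit : ∑ i, D i * x i = ∑ i : Fin n, (D i.castSucc - D (last n)) * x i.castSucc
        + D (last n) * ∑ i, x i := by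
      simp only [Fin.sum_univ_castSucc, sub_mul, sum_sub_distrib, mul_add, mul_sum]
      ring
    rw [hsplit]
    refine add_nonneg (ih (fun i j hij => sub_le_sub_right (hD (castSucc_le_castSucc_iff.2 hij)) _)
      (fun i => sub_nonneg.2 (hD (le_last _))) fun i => ?_) (mul_nonneg (hD0 _) ?_)
    · rw [← Fin.sum_Iic_castSucc]
      exact hx _
    · simpa [← Fin.top_eq_last, Iic_top] using hx (last n)

theorem Fin.sum_mul_le_sum_Iic_of_antitone {R : Type*} [CommRing R] [PartialOrder R]
    [IsOrderedRing R] {n : ℕ} {σ d : Fin n → R} (hσ : Antitone σ) (hσ0 : ∀ i, 0 ≤ σ i)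
    (hd0 : ∀ i, 0 ≤ d i) (hd1 : ∀ i, d i ≤ 1) (k : Fin n) (hd : ∑ i, d i ≤ k + 1) :
    ∑ i, σ i * d i ≤ ∑ i ∈ Iic k, σ i := by
  classical
  set x : Fin n → R := fun i => (if i ∈ Iic k then 1 else 0) - d i
  have hx : ∀ m, 0 ≤ ∑ j ∈ Iic m, x j := by
    intro m
    rcases le_or_gt m k with hmk | hkm
    · refine sum_nonneg fun j hj => ?_
      simp only [x, mem_Iic.2 ((mem_Iic.1 hj).trans hmk), if_true, sub_nonneg, hd1]
    · have hinter : Iic m ∩ Iic k = Iic k := inter_eq_right.2 (Iic_subset_Iic.2 hkm.le)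
      have hdm : ∑ j ∈ Iic m, d j ≤ ∑ j, d j :=
        sum_le_sum_of_subset_of_nonneg (subset_univ _) fun j _ _ => hd0 j
      simp only [x, sum_sub_distrib, sum_ite_mem, hinter]
      rw [Finset.sum_const, Fin.card_Iic, nsmul_one, sub_nonneg]
      exact_mod_cast hdm.trans hd
  simpa only [x, mul_sub, sum_sub_distrib, mul_ite, mul_one, mul_zero, sum_ite_mem, univ_inter,
    sub_nonneg] using Fin.sum_mul_nonneg_of_antitone hσ hσ0 hx

theorem Fin.exists_perm_antitone_comp {α : Type*} [LinearOrder α] {n : ℕ} (f : Fin n → α) :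
    ∃ ρ : Equiv.Perm (Fin n), Antitone (f ∘ ρ) :=
  ⟨Fin.revPerm.trans (Tuple.sort f), fun _ _ hij => Tuple.monotone_sort f (Fin.rev_le_rev.2 hij)⟩

theorem ConvexOn.le_of_mem_convexHull {E : Type*} [AddCommGroup E] [Module ℝ E]
    {s t : Set E} {f : E → ℝ} {c : ℝ} {x : E} (hf : ConvexOn ℝ s f) (hts : t ⊆ s)
    (hft : ∀ y ∈ t, f y ≤ c) (hx : x ∈ convexHull ℝ t) : f x ≤ c := by
  obtain ⟨y, hy, hxy⟩ := hf.exists_ge_of_mem_convexHull hts hx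
  exact hxy.trans (hft y hy)

theorem StrictConvexOn.lt_of_mem_convexHull_of_notMem {E : Type*} [AddCommGroup E] [Module ℝ E]
    {s t : Set E} {f : E → ℝ} {c : ℝ} {x : E} (hf : StrictConvexOn ℝ s f) (hts : t ⊆ s)
    (hft : ∀ y ∈ t, f y ≤ c) (hx : x ∈ convexHull ℝ t) (hxt : x ∉ t) : f x < c := by
  have hnot : x ∉ (convexHull ℝ t).extremePoints ℝ := fun hext =>
    hxt (extremePoints_convexHull_subset hext)
  simp only [mem_extremePoints, not_and, not_forall] at hnot
  obtain ⟨x₁, hx₁, x₂, hx₂, hseg, hne⟩ := hnot hx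
  have hx₁₂ : x₁ ≠ x₂ := by
    rintro rfl
    rw [openSegment_same, Set.mem_singleton_iff] at hseg
    exact hne hseg.symm hseg.symm
  have hhull : convexHull ℝ t ⊆ s := convexHull_min hts hf.1
  obtain ⟨a, b, ha, hb, hab, rfl⟩ := hseg
  calc f (a • x₁ + b • x₂) < a • f x₁ + b • f x₂ := hf.2 (hhull hx₁) (hhull hx₂) hx₁₂ ha hb hab
    _ ≤ a • c + b • c := by
        gcongr
        exacts [hf.convexOn.le_of_mem_convexHull hts hft hx₁,
          hf.convexOn.le_of_mem_convexHull hts hft hx₂]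
    _ = c := by rw [← add_smul, hab, one_smul]

section SignedPerms

variable {n : ℕ}

def signedPerms (w : Fin n → ℝ) : Set (Fin n → ℝ) :=
  Set.range fun p : Equiv.Perm (Fin n) × (Fin n → ℤˣ) => fun i => ((p.2 i : ℤ) : ℝ) * w (p.1 i)

theorem finite_signedPerms (w : Fin n → ℝ) : (signedPerms w).Finite :=
  Set.finite_range _

theorem eq_of_mem_signedPerms {u w : Fin n → ℝ} (hu : Antitone u) (hu0 : ∀ i, 0 ≤ u i)
    (hw : Antitone w) (hw0 : ∀ i, 0 ≤ w i) (huw : u ∈ signedPerms w) : u = w := by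
  obtain ⟨⟨e, ε⟩, hεu⟩ := huw
  have hu_eq : u = w ∘ e := funext fun i => by
    rw [← abs_of_nonneg (hu0 i), ← hεu]
    simp [abs_mul, abs_of_nonneg (hw0 (e i)), ← Int.cast_abs, Int.isUnit_iff_abs_eq.1 (ε i).isUnit]
  rw [hu_eq] at hu ⊢
  exact Tuple.unique_antitone (σ := e) (τ := Equiv.refl _) hu hw

theorem mem_convexHull_signedPerms {u w : Fin n → ℝ} (hu : Antitone u) (hu0 : ∀ i, 0 ≤ u i)
    (huw : ∀ k, ∑ i ∈ Iic k, u i ≤ ∑ i ∈ Iic k, w i) : u ∈ convexHull ℝ (signedPerms w) := by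
  by_contra hmem
  obtain ⟨f, r, hf, hfu⟩ := geometric_hahn_banach_closed_point (convex_convexHull ℝ _)
    ((finite_signedPerms w).isClosed_convexHull ℝ) hmem
  set c : Fin n → ℝ := fun i => f fun j => if i = j then 1 else 0
  have hfc (x : Fin n → ℝ) : f x = ∑ i, x i * c i := by
    simpa using LinearMap.pi_apply_eq_sum_univ (f : (Fin n → ℝ) →ₗ[ℝ] ℝ) x
  obtain ⟨ρ, hρ⟩ := Fin.exists_perm_antitone_comp fun i => |c i|
  let ε : Fin n → ℤˣ := fun i => if c i < 0 then -1 else 1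
  have hεc (i : Fin n) : ((ε i : ℤ) : ℝ) * c i = |c i| := by
    by_cases h : c i < 0 <;> simp [ε, h, abs_of_neg, abs_of_nonneg, not_lt.1]
  set y : Fin n → ℝ := fun i => ((ε i : ℤ) : ℝ) * w (ρ.symm i)
  have hy : f y < r := hf y (subset_convexHull ℝ _ ⟨(ρ.symm, ε), rfl⟩)
  have hfy : f y = ∑ i, |c (ρ i)| * w i := by
    rw [hfc, ← Equiv.sum_comp ρ]
    refine sum_congr rfl fun i _ => ?_
    simp only [y, Equiv.symm_apply_apply, ← hεc]
    ring
  have hfu_le : f u ≤ ∑ i, u i * |c i| := by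
    rw [hfc]
    exact sum_le_sum fun i _ => mul_le_mul_of_nonneg_left (le_abs_self _) (hu0 i)
  have hrearr : ∑ i, u i * |c i| ≤ ∑ i, |c (ρ i)| * u i := by
    simpa [mul_comm] using (hu.monovary hρ).sum_mul_comp_perm_le_sum_mul (σ := ρ.symm)
  have habel : ∑ i, |c (ρ i)| * u i ≤ ∑ i, |c (ρ i)| * w i := by
    have := Fin.sum_mul_nonneg_of_antitone hρ (fun i => abs_nonneg (c (ρ i)))
      (x := w - u) fun k => by simpa using huw k
    simpa [mul_sub] using this
  linarith

end SignedPerms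

theorem exists_orthonormalBasis_eq_norm_smul {ι F : Type*} [Fintype ι] [NormedAddCommGroup F]
    [InnerProductSpace ℝ F] [FiniteDimensional ℝ F]
    (hcard : Module.finrank ℝ F = Fintype.card ι) {f : ι → F}
    (hf : Pairwise fun i j => ⟪f i, f j⟫ = 0) :
    ∃ u : OrthonormalBasis ι ℝ F, ∀ i, f i = ‖f i‖ • u i := by
  let S : Set ι := {i | f i ≠ 0}
  have hS : Orthonormal ℝ (S.domRestrict fun i => ‖f i‖⁻¹ • f i) := by
    refine ⟨fun i => norm_smul_inv_norm i.2, fun i j hij => ?_⟩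
    simp [real_inner_smul_left, real_inner_smul_right, hf (Subtype.coe_ne_coe.2 hij)]
  obtain ⟨u, hu⟩ := hS.exists_orthonormalBasis_extension_of_card_eq hcard
  refine ⟨u, fun i => ?_⟩
  by_cases hi : f i = 0
  · simp [hi]
  · rw [hu i hi, smul_inv_smul₀ (norm_ne_zero_iff.2 hi)]

theorem Orthonormal.sum_sq_inner_le_one {ι E : Type*} [NormedAddCommGroup E]
    [InnerProductSpace ℝ E] {p : ι → E} (hp : Orthonormal ℝ p) (s : Finset ι) {x : E}
    (hx : ‖x‖ = 1) : ∑ i ∈ s, ⟪p i, x⟫ ^ 2 ≤ 1 := by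
  simpa [hx] using hp.sum_inner_products_le (s := s) x

theorem Orthonormal.sum_sum_sq_inner_eq_card {ι κ E : Type*} [Fintype κ] [NormedAddCommGroup E]
    [InnerProductSpace ℝ E] {p : ι → E} (hp : Orthonormal ℝ p) (s : Finset ι)
    (b : OrthonormalBasis κ ℝ E) : ∑ j, ∑ i ∈ s, ⟪p i, b j⟫ ^ 2 = #s := by
  rw [sum_comm]
  simp [b.sum_sq_inner_left, hp.1]

namespace Matrix

theorem inner_toEuclideanLin_toEuclideanLin {m n : Type*} [Fintype m] [Fintype n]
    [DecidableEq n] (X : Matrix m n ℝ) (v w : EuclideanSpace ℝ n) :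
    ⟪toEuclideanLin X v, toEuclideanLin X w⟫ = ⟪v, toEuclideanLin (Xᵀ * X) w⟫ := by
  simp [EuclideanSpace.inner_eq_star_dotProduct, toLpLin_apply, ← mulVec_mulVec,
    dotProduct_mulVec, mulVec_transpose]

theorem sum_sq_smul_add_smul_lt {m n : Type*} [Fintype m] [Fintype n]
    {X Y : Matrix m n ℝ} (hXY : X ≠ Y) {a b : ℝ} (ha : 0 < a) (hb : 0 < b) (hab : a + b = 1) :
    ∑ i, ∑ j, (a • X + b • Y) i j ^ 2 < a * ∑ i, ∑ j, X i j ^ 2 + b * ∑ i, ∑ j, Y i j ^ 2 := by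
  obtain ⟨i, j, hij⟩ : ∃ i j, X i j ≠ Y i j := by
    by_contra! h
    exact hXY (Matrix.ext h)
  have hpos : 0 < ∑ i, ∑ j, (X i j - Y i j) ^ 2 :=
    sum_pos' (fun _ _ => sum_nonneg fun _ _ => sq_nonneg _) ⟨i, mem_univ _,
      sum_pos' (fun _ _ => sq_nonneg _) ⟨j, mem_univ _, sq_pos_iff.2 (sub_ne_zero.2 hij)⟩⟩
  have hentry (x y : ℝ) : (a * x + b * y) ^ 2 = a * x ^ 2 + b * y ^ 2 - a * b * (x - y) ^ 2 := by
    rw [eq_sub_of_add_eq' hab]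
    ring
  simp only [add_apply, smul_apply, smul_eq_mul, hentry, sum_sub_distrib, sum_add_distrib,
    ← mul_sum]
  nlinarith [mul_pos (mul_pos ha hb) hpos]

theorem isHermitian_transpose_mul_self {n : Type*} [Fintype n] (X : Matrix n n ℝ) :
    (Xᵀ * X).IsHermitian := by
  simpa only [conjTranspose_eq_transpose_of_trivial] using isHermitian_conjTranspose_mul_self X

end Matrix

section SingularValues

variable {n : ℕ}

theorem exists_perm_svals_eq (X : Matrix (Fin n) (Fin n) ℝ) : ∃ ρ : Equiv.Perm (Fin n),
    ∀ i, svals X i = √((isHermitian_transpose_mul_self X).eigenvalues (ρ i)) :=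
  ⟨Fin.revPerm.trans (Tuple.sort _), fun _ => rfl⟩

theorem svals_nonneg (X : Matrix (Fin n) (Fin n) ℝ) (i : Fin n) : 0 ≤ svals X i :=
  Real.sqrt_nonneg _

theorem svals_antitone (X : Matrix (Fin n) (Fin n) ℝ) : Antitone (svals X) :=
  fun _ _ hij => Tuple.monotone_sort (fun j => √((isHermitian_transpose_mul_self X).eigenvalues j))
    (Fin.rev_le_rev.2 hij)

theorem sum_svals_sq (X : Matrix (Fin n) (Fin n) ℝ) :
    ∑ i, svals X i ^ 2 = ∑ i, ∑ j, X i j ^ 2 := by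
  obtain ⟨ρ, hρ⟩ := exists_perm_svals_eq X
  have hpsd : (Xᵀ * X).PosSemidef := by
    simpa only [conjTranspose_eq_transpose_of_trivial] using posSemidef_conjTranspose_mul_self X
  calc ∑ i, svals X i ^ 2 = ∑ i, (isHermitian_transpose_mul_self X).eigenvalues (ρ i) := by
        simp only [hρ, Real.sq_sqrt (hpsd.eigenvalues_nonneg _)]
    _ = ∑ i, (isHermitian_transpose_mul_self X).eigenvalues i := Equiv.sum_comp ρ _
    _ = (Xᵀ * X).trace := by simp [(isHermitian_transpose_mul_self X).trace_eq_sum_eigenvalues]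
    _ = ∑ i, ∑ j, X i j ^ 2 := by
        simp only [trace, diag_apply, mul_apply, transpose_apply, sq]
        exact sum_comm

theorem svals_smul_add_smul_ne_of_svals_eq {X Y : Matrix (Fin n) (Fin n) ℝ} (hXY : X ≠ Y)
    (hσ : svals X = svals Y) {a b : ℝ} (ha : 0 < a) (hb : 0 < b) (hab : a + b = 1) :
    svals (a • X + b • Y) ≠ svals X := by
  intro hZ
  have := sum_sq_smul_add_smul_lt hXY ha hb hab
  rw [← sum_svals_sq, ← sum_svals_sq, ← sum_svals_sq, hZ, ← hσ, ← add_mul, hab, one_mul] at this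
  exact lt_irrefl _ this

theorem exists_svd (X : Matrix (Fin n) (Fin n) ℝ) :
    ∃ U V : OrthonormalBasis (Fin n) ℝ (EuclideanSpace ℝ (Fin n)),
      ∀ i, toEuclideanLin X (V i) = svals X i • U i := by
  obtain ⟨ρ, hρ⟩ := exists_perm_svals_eq X
  set hH := isHermitian_transpose_mul_self X
  set V := hH.eigenvectorBasis
  have heig (j : Fin n) : toEuclideanLin (Xᵀ * X) (V j) = hH.eigenvalues j • V j := by
    rw [toLpLin_apply, hH.mulVec_eigenvectorBasis j]
    rfl
  have hinner (i j : Fin n) :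
      ⟪toEuclideanLin X (V i), toEuclideanLin X (V j)⟫ = hH.eigenvalues j * ⟪V i, V j⟫ := by
    rw [inner_toEuclideanLin_toEuclideanLin, heig, real_inner_smul_right]
  have hnorm (j : Fin n) : ‖toEuclideanLin X (V j)‖ = √(hH.eigenvalues j) := by
    rw [norm_eq_sqrt_real_inner, hinner, real_inner_self_eq_norm_sq, V.orthonormal.1 j]
    simp
  obtain ⟨U, hU⟩ := exists_orthonormalBasis_eq_norm_smul (by simp)
    (f := fun j => toEuclideanLin X (V j)) fun i j hij => by simp [hinner, V.orthonormal.2 hij]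
  refine ⟨U.reindex ρ.symm, V.reindex ρ.symm, fun i => ?_⟩
  rw [OrthonormalBasis.reindex_apply, OrthonormalBasis.reindex_apply, Equiv.symm_symm, hU (ρ i),
    hnorm, hρ]

theorem sum_Iic_inner_le_sum_Iic_svals (X : Matrix (Fin n) (Fin n) ℝ)
    {p q : Fin n → EuclideanSpace ℝ (Fin n)} (hp : Orthonormal ℝ p) (hq : Orthonormal ℝ q)
    (k : Fin n) : ∑ i ∈ Iic k, ⟪p i, toEuclideanLin X (q i)⟫ ≤ ∑ i ∈ Iic k, svals X i := by
  obtain ⟨U, V, hUV⟩ := exists_svd X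
  set a : Fin n → ℝ := fun j => ∑ i ∈ Iic k, ⟪p i, U j⟫ ^ 2
  set b : Fin n → ℝ := fun j => ∑ i ∈ Iic k, ⟪q i, V j⟫ ^ 2
  have hexpand (i : Fin n) :
      ⟪p i, toEuclideanLin X (q i)⟫ = ∑ j, svals X j * (⟪p i, U j⟫ * ⟪q i, V j⟫) := by
    conv_lhs => rw [← V.sum_repr' (q i)]
    simp only [map_sum, map_smul, hUV, inner_sum, real_inner_smul_right]
    exact sum_congr rfl fun j _ => by rw [real_inner_comm]; ring
  have hamgm (j : Fin n) : ∑ i ∈ Iic k, ⟪p i, U j⟫ * ⟪q i, V j⟫ ≤ (a j + b j) / 2 := by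
    simp only [a, b, ← sum_add_distrib, sum_div]
    exact sum_le_sum fun i _ => by nlinarith [sq_nonneg (⟪p i, U j⟫ - ⟪q i, V j⟫)]
  have ha1 (j : Fin n) : a j ≤ 1 := hp.sum_sq_inner_le_one _ (U.orthonormal.1 j)
  have hb1 (j : Fin n) : b j ≤ 1 := hq.sum_sq_inner_le_one _ (V.orthonormal.1 j)
  have hab : ∑ j, (a j + b j) / 2 = k + 1 := by
    rw [← sum_div, sum_add_distrib, hp.sum_sum_sq_inner_eq_card, hq.sum_sum_sq_inner_eq_card,
      Fin.card_Iic]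
    push_cast
    ring
  calc ∑ i ∈ Iic k, ⟪p i, toEuclideanLin X (q i)⟫
      = ∑ j, svals X j * ∑ i ∈ Iic k, ⟪p i, U j⟫ * ⟪q i, V j⟫ := by
        simp_rw [hexpand, mul_sum]
        exact sum_comm
    _ ≤ ∑ j, svals X j * ((a j + b j) / 2) :=
        sum_le_sum fun j _ => mul_le_mul_of_nonneg_left (hamgm j) (svals_nonneg X j)
    _ ≤ ∑ i ∈ Iic k, svals X i :=
        Fin.sum_mul_le_sum_Iic_of_antitone (svals_antitone X) (svals_nonneg X)
          (fun j => by positivity) (fun j => by linarith [ha1 j, hb1 j]) k hab.le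

theorem sum_Iic_svals_smul_add_smul_le (X Y : Matrix (Fin n) (Fin n) ℝ) {a b : ℝ} (ha : 0 ≤ a)
    (hb : 0 ≤ b) (k : Fin n) :
    ∑ i ∈ Iic k, svals (a • X + b • Y) i ≤ ∑ i ∈ Iic k, (a • svals X + b • svals Y) i := by
  obtain ⟨U, V, hUV⟩ := exists_svd (a • X + b • Y)
  have hσ (i : Fin n) : svals (a • X + b • Y) i
      = a * ⟪U i, toEuclideanLin X (V i)⟫ + b * ⟪U i, toEuclideanLin Y (V i)⟫ := by
    rw [← real_inner_smul_right, ← real_inner_smul_right, ← inner_add_right, ← LinearMap.smul_apply,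
      ← LinearMap.smul_apply, ← LinearMap.add_apply, ← map_smul, ← map_smul, ← map_add, hUV,
      real_inner_smul_right, real_inner_self_eq_norm_sq, U.orthonormal.1 i, one_pow, mul_one]
  simp only [hσ, Pi.add_apply, Pi.smul_apply, smul_eq_mul, sum_add_distrib, ← mul_sum]
  exact add_le_add
    (mul_le_mul_of_nonneg_left (sum_Iic_inner_le_sum_Iic_svals X U.orthonormal V.orthonormal k) ha)
    (mul_le_mul_of_nonneg_left (sum_Iic_inner_le_sum_Iic_svals Y U.orthonormal V.orthonormal k) hb)

end SingularValues

theorem stmt_19 (n : ℕ) (h : (Fin n → ℝ) → ℝ)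
    (hconv : StrictConvexOn ℝ Set.univ h)
    (hsym : ∀ (e : Equiv.Perm (Fin n)) (ε : Fin n → ℝ), (∀ i, ε i = 1 ∨ ε i = -1) →
      ∀ x : Fin n → ℝ, h (fun i => ε i * x (e i)) = h x) :
    StrictConvexOn ℝ Set.univ
      (fun X : Matrix (Fin n) (Fin n) ℝ => h (svals X)) := by
  refine ⟨convex_univ, fun X _ Y _ hXY a b ha hb hab => ?_⟩
  set w := a • svals X + b • svals Y
  have hmem : svals (a • X + b • Y) ∈ convexHull ℝ (signedPerms w) :=
    mem_convexHull_signedPerms (svals_antitone _) (svals_nonneg _)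
      (sum_Iic_svals_smul_add_smul_le X Y ha.le hb.le)
  have hhw : ∀ y ∈ signedPerms w, h y ≤ h w := by
    rintro _ ⟨⟨e, ε⟩, rfl⟩
    refine (hsym e _ (fun i => ?_) w).le
    rcases Int.units_eq_one_or (ε i) with hε | hε <;> simp [hε]
  by_cases hσ : svals X = svals Y
  · have hw : w = svals X := by simp only [w, ← hσ, ← add_smul, hab, one_smul]
    have hnot : svals (a • X + b • Y) ∉ signedPerms w := fun hZ =>
      svals_smul_add_smul_ne_of_svals_eq hXY hσ ha hb hab <| hw ▸ eq_of_mem_signedPerms (svals_antitone _)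
        (svals_nonneg _) (hw ▸ svals_antitone X) (hw ▸ svals_nonneg X) hZ
    calc h (svals (a • X + b • Y)) < h w :=
          hconv.lt_of_mem_convexHull_of_notMem (Set.subset_univ _) hhw hmem hnot
      _ = a • h (svals X) + b • h (svals Y) := by rw [hw, ← hσ, ← add_smul, hab, one_smul]
  · calc h (svals (a • X + b • Y)) ≤ h w :=
          hconv.convexOn.le_of_mem_convexHull (Set.subset_univ _) hhw hmem
      _ < a • h (svals X) + b • h (svals Y) := hconv.2 trivial trivial hσ ha hb hab
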